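/- arXiv:2301.04247 — 2 statements merged into one kernel-verified Lean document; each statement's English description precedes it below -/
import Mathlib

section
/- Let A be a C*-algebra and H a Hilbert A-module such that the C*-algebra K(H) of compact module operators has an identity. Then H is algebraically finitely generated: there exist ξ₁, …, ξₙ ∈ H with H = ∑ᵢ ξᵢ·A. -/
/-!
Each rank-one operator `θ_{x,x}` has `x` in the closure of its range: with `b = ⟪x, x⟫` and
`f(t) = m t / (1 + m t)`, the vectors `x • f(b)` lie in that range and `‖x • f(b) - x‖² ≤ 1 / m`.
Hence an identity `e` of `K(H)` fixes every vector, i.e. `e = 1`. Some `S` in the algebraic span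
of the rank-one operators then satisfies `‖1 - S‖ < 1`, so `S = ∑ θ_{ξᵢ,ηᵢ}` is invertible, and
every `h` equals `S (S⁻¹ h) = ∑ ξᵢ • ⟪ηᵢ, S⁻¹ h⟫`.
-/

open scoped RightActions

noncomputable section

/-- The Mathlib (December 2024) notion of a Hilbert C⋆-module with a *right* `A`-action,
copied verbatim (Mathlib's `CStarModule` now has a left action, a different notion). -/
class RightCStarModule (A : outParam <| Type*) (E : Type*) [NonUnitalSemiring A] [StarRing A]
    [Module ℂ A] [AddCommGroup E] [Module ℂ E] [PartialOrder A] [SMul Aᵐᵒᵖ E] [Norm A] [Norm E]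
    extends Inner A E where
  inner_add_right {x} {y} {z} : inner x (y + z) = inner x y + inner x z
  inner_self_nonneg {x} : 0 ≤ inner x x
  inner_self {x} : inner x x = 0 ↔ x = 0
  inner_op_smul_right {a : A} {x y : E} : inner x (y <• a) = inner x y * a
  inner_smul_right_complex {z : ℂ} {x} {y} : inner x (z • y) = z • inner x y
  star_inner x y : star (inner x y) = inner y x
  norm_eq_sqrt_norm_inner_self x : ‖x‖ = √‖inner x x‖

/-- The C*-algebra `K(H)` of "compact" operators on a Hilbert `A`-module `H`: the closed
linear span of the rank-one operators `θ_{x,y} : z ↦ x·⟪y,z⟫`, realized as a set of bounded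
operators on `H`. -/
def compactOperators (A E : Type*) [NonUnitalCStarAlgebra A] [PartialOrder A]
    [StarOrderedRing A] [NormedAddCommGroup E] [NormedSpace ℂ E] [SMul Aᵐᵒᵖ E]
    [RightCStarModule A E] : Set (E →L[ℂ] E) :=
  closure (Submodule.span ℂ
    {T : E →L[ℂ] E | ∃ x y : E, ∀ z, T z = x <• (inner A y z : A)} : Set (E →L[ℂ] E))

section CStarAlgebra

variable {A : Type*} [NonUnitalCStarAlgebra A] [PartialOrder A] [StarOrderedRing A]

/-- In the unitization, `a = m b (1 + m b)⁻¹` and the last expression is `b (1 + m b)⁻²`. -/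
lemma exists_eq_smul_sub_mul_and_norm_le {b : A} (hb : 0 ≤ b) {m : ℝ} (hm : 0 < m) :
    ∃ a : A, IsSelfAdjoint a ∧ a = m • (b - b * a) ∧
      ‖a * b * a - a * b - b * a + b‖ ≤ m⁻¹ := by
  have hσ : ∀ t ∈ quasispectrum ℝ b, 0 ≤ t := quasispectrum_nonneg_of_nonneg b hb
  set f : ℝ → ℝ := fun t => m * t / (m * t + 1) with hf_def
  have hden : ∀ t ∈ quasispectrum ℝ b, m * t + 1 ≠ 0 := fun t ht => by have := hσ t ht; positivity
  have hf : ContinuousOn f (quasispectrum ℝ b) := ContinuousOn.div (by fun_prop) (by fun_prop) hden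
  set a := cfcₙ f b
  have hba : b * a = cfcₙ (fun t => t * f t) b := by rw [cfcₙ_mul _ f b, cfcₙ_id' ℝ b]
  have hab : a * b = cfcₙ (fun t => f t * t) b := by rw [cfcₙ_mul f _ b, cfcₙ_id' ℝ b]
  have haba : a * b * a = cfcₙ (fun t => f t * t * f t) b := by
    rw [cfcₙ_mul _ f b, hab]
  refine ⟨a, cfcₙ_predicate f b, ?_, ?_⟩
  · calc a = cfcₙ (fun t => m • (t - t * f t)) b := cfcₙ_congr fun t ht => by
          have := hden t ht
          simp only [hf_def, smul_eq_mul]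
          field_simp
          ring
      _ = m • (b - b * a) := by
          rw [cfcₙ_smul m _ b, cfcₙ_sub _ _ b, cfcₙ_id' ℝ b, hba]
  · calc ‖a * b * a - a * b - b * a + b‖
          = ‖cfcₙ (fun t => f t * t * f t - f t * t - t * f t + t) b‖ := by
            rw [cfcₙ_add _ _ b, cfcₙ_sub _ _ b, cfcₙ_sub _ _ b, haba, hab, hba, cfcₙ_id' ℝ b]
      _ ≤ m⁻¹ := norm_cfcₙ_le fun t ht => by
          have ht0 := hσ t ht
          have hval : f t * t * f t - f t * t - t * f t + t = t / (m * t + 1) ^ 2 := by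
            rw [hf_def]
            field_simp
            ring
          rw [hval, Real.norm_of_nonneg (by positivity), div_le_iff₀ (by positivity),
            inv_mul_eq_div, le_div_iff₀ hm]
          nlinarith

end CStarAlgebra

namespace RightCStarModule

section Algebraic

variable {A E : Type*} [NonUnitalCStarAlgebra A] [PartialOrder A] [AddCommGroup E] [Module ℂ E]
  [SMul Aᵐᵒᵖ E] [Norm E] [RightCStarModule A E]

local notation "⟪" x ", " y "⟫" => inner A x y

lemma inner_add_left {x y z : E} : ⟪x + y, z⟫ = ⟪x, z⟫ + ⟪y, z⟫ := by
  rw [← star_inner, inner_add_right, star_add, star_inner, star_inner]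

lemma inner_smul_left_complex {z : ℂ} {x y : E} : ⟪z • x, y⟫ = star z • ⟪x, y⟫ := by
  rw [← star_inner, inner_smul_right_complex, star_smul, star_inner]

lemma inner_op_smul_left {a : A} {x y : E} : ⟪x <• a, y⟫ = star a * ⟪x, y⟫ := by
  rw [← star_inner, inner_op_smul_right, star_mul, star_inner]

variable (A) in
def innerₛₗ : E →ₗ⋆[ℂ] E →ₗ[ℂ] A where
  toFun x :=
    { toFun := fun y => ⟪x, y⟫
      map_add' := fun _ _ => inner_add_right
      map_smul' := fun _ _ => inner_smul_right_complex }
  map_add' _ _ := LinearMap.ext fun _ => inner_add_left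
  map_smul' _ _ := LinearMap.ext fun _ => inner_smul_left_complex

lemma innerₛₗ_apply {x y : E} : innerₛₗ A x y = ⟪x, y⟫ := rfl

lemma inner_sub_left {x y z : E} : ⟪x - y, z⟫ = ⟪x, z⟫ - ⟪y, z⟫ := by simp [← innerₛₗ_apply]

lemma inner_sub_right {x y z : E} : ⟪x, y - z⟫ = ⟪x, y⟫ - ⟪x, z⟫ := by simp [← innerₛₗ_apply]

lemma inner_smul_left_real {r : ℝ} {x y : E} : ⟪r • x, y⟫ = r • ⟪x, y⟫ := by
  simpa using inner_smul_left_complex (A := A) (z := (r : ℂ)) (x := x) (y := y)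

lemma inner_smul_right_real {r : ℝ} {x y : E} : ⟪x, r • y⟫ = r • ⟪x, y⟫ := by
  simpa using inner_smul_right_complex (A := A) (z := (r : ℂ)) (x := x) (y := y)

lemma isSelfAdjoint_inner_self {x : E} : IsSelfAdjoint ⟪x, x⟫ := star_inner x x

lemma norm_sq_eq {x : E} : ‖x‖ ^ 2 = ‖⟪x, x⟫‖ := by
  rw [norm_eq_sqrt_norm_inner_self (A := A) x, Real.sq_sqrt (norm_nonneg _)]

variable (A) in
lemma ext_inner_right {v w : E} (h : ∀ z : E, ⟪z, v⟫ = ⟪z, w⟫) : v = w := by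
  rw [← sub_eq_zero, ← inner_self (A := A), inner_sub_right, h, sub_self]

lemma op_smul_add (x : E) (a b : A) : x <• (a + b) = x <• a + x <• b :=
  ext_inner_right A fun z => by simp only [inner_op_smul_right, inner_add_right, mul_add]

lemma op_smul_smul_complex (x : E) (c : ℂ) (a : A) : x <• (c • a) = c • (x <• a) :=
  ext_inner_right A fun z => by
    simp only [inner_op_smul_right, inner_smul_right_complex, mul_smul_comm]

lemma smul_complex_op_smul (c : ℂ) (x : E) (a : A) : (c • x) <• a = c • (x <• a) :=
  ext_inner_right A fun z => by
    simp only [inner_op_smul_right, inner_smul_right_complex, smul_mul_assoc]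

lemma inner_op_smul_sub_self {x : E} {a : A} (ha : IsSelfAdjoint a) :
    ⟪x <• a - x, x <• a - x⟫ = a * ⟪x, x⟫ * a - a * ⟪x, x⟫ - ⟪x, x⟫ * a + ⟪x, x⟫ := by
  simp only [inner_sub_right, inner_sub_left, inner_op_smul_right, inner_op_smul_left, ha.star_eq]
  noncomm_ring

end Algebraic

section Normed

variable {A E : Type*} [NonUnitalCStarAlgebra A] [PartialOrder A]
  [NormedAddCommGroup E] [NormedSpace ℂ E] [SMul Aᵐᵒᵖ E] [RightCStarModule A E]

local notation "⟪" x ", " y "⟫" => inner A x y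

lemma norm_op_smul_le (x : E) (a : A) : ‖x <• a‖ ≤ ‖x‖ * ‖a‖ := by
  refine (pow_le_pow_iff_left₀ (norm_nonneg _) (by positivity) two_ne_zero).mp ?_
  calc ‖x <• a‖ ^ 2 = ‖star a * ⟪x, x⟫ * a‖ := by
        rw [norm_sq_eq, inner_op_smul_left, inner_op_smul_right, mul_assoc]
    _ ≤ ‖a‖ * ‖⟪x, x⟫‖ * ‖a‖ := by
        refine (norm_mul_le _ _).trans ?_
        gcongr
        exact (norm_mul_le _ _).trans_eq (by rw [norm_star])
    _ = (‖x‖ * ‖a‖) ^ 2 := by rw [← norm_sq_eq]; ring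

lemma exists_sum_of_mem_span_rankOne {T : E →L[ℂ] E}
    (hT : T ∈ Submodule.span ℂ {T : E →L[ℂ] E | ∃ x y : E, ∀ z, T z = x <• ⟪y, z⟫}) :
    ∃ (n : ℕ) (ξ η : Fin n → E), ∀ z, T z = ∑ i, ξ i <• ⟪η i, z⟫ := by
  obtain ⟨n, c, g, rfl⟩ := Submodule.mem_span_set'.mp hT
  choose ξ η hg using fun i => (g i).2
  refine ⟨n, fun i => c i • ξ i, η, fun z => ?_⟩
  simp only [_root_.sum_apply, _root_.smul_apply, hg, smul_complex_op_smul]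

variable [StarOrderedRing A]

lemma inner_mul_inner_swap_le {x y : E} : ⟪y, x⟫ * ⟪x, y⟫ ≤ ‖x‖ ^ 2 • ⟪y, y⟫ := by
  rcases eq_or_ne x 0 with rfl | hx
  · simp [← innerₛₗ_apply]
  have key : ∀ a : A, (0 : A) ≤ ‖x‖ ^ 2 • (a * star a) - ‖x‖ ^ 2 • (a * ⟪x, y⟫)
      - ‖x‖ ^ 2 • (⟪y, x⟫ * star a) + ‖x‖ ^ 2 • (‖x‖ ^ 2 • ⟪y, y⟫) := fun a =>
    calc (0 : A) ≤ ⟪x <• star a - ‖x‖ ^ 2 • y, x <• star a - ‖x‖ ^ 2 • y⟫ := inner_self_nonneg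
      _ = a * ⟪x, x⟫ * star a - ‖x‖ ^ 2 • (a * ⟪x, y⟫)
            - ‖x‖ ^ 2 • (⟪y, x⟫ * star a) + ‖x‖ ^ 2 • (‖x‖ ^ 2 • ⟪y, y⟫) := by
        simp only [inner_sub_right, inner_op_smul_right, inner_sub_left, inner_op_smul_left,
          inner_smul_left_real, inner_smul_right_real, star_star, sub_mul, smul_sub,
          smul_mul_assoc, mul_assoc]
        abel
      _ ≤ _ := by
        gcongr
        calc a * ⟪x, x⟫ * star a ≤ ‖⟪x, x⟫‖ • (a * star a) :=
              CStarAlgebra.star_right_conjugate_le_norm_smul (hb := isSelfAdjoint_inner_self)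
          _ = ‖x‖ ^ 2 • (a * star a) := by rw [norm_sq_eq]
  have := key ⟪y, x⟫
  simp only [star_inner, sub_self, zero_sub, le_neg_add_iff_add_le, add_zero] at this
  rwa [smul_le_smul_iff_of_pos_left (by positivity)] at this

lemma norm_inner_le {x y : E} : ‖⟪x, y⟫‖ ≤ ‖x‖ * ‖y‖ := by
  refine (pow_le_pow_iff_left₀ (norm_nonneg _) (by positivity) two_ne_zero).mp ?_
  calc ‖⟪x, y⟫‖ ^ 2 = ‖⟪y, x⟫ * ⟪x, y⟫‖ := by
        rw [← star_inner x y, CStarRing.norm_star_mul_self, pow_two]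
    _ ≤ ‖‖x‖ ^ 2 • ⟪y, y⟫‖ := by
        refine CStarAlgebra.norm_le_norm_of_nonneg_of_le ?_ inner_mul_inner_swap_le
        rw [← star_inner x y]
        exact star_mul_self_nonneg _
    _ = (‖x‖ * ‖y‖) ^ 2 := by
        rw [norm_smul, ← norm_sq_eq, Real.norm_of_nonneg (by positivity), mul_pow]

variable (A) in
def rankOne (x y : E) : E →L[ℂ] E :=
  LinearMap.mkContinuous
    { toFun := fun z => x <• ⟪y, z⟫
      map_add' := fun _ _ => by rw [inner_add_right, op_smul_add]
      map_smul' := fun _ _ => by rw [inner_smul_right_complex, op_smul_smul_complex]; rfl }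
    (‖x‖ * ‖y‖) fun z =>
      calc ‖x <• ⟪y, z⟫‖ ≤ ‖x‖ * (‖y‖ * ‖z‖) :=
            (norm_op_smul_le x _).trans (by gcongr; exact norm_inner_le)
        _ = ‖x‖ * ‖y‖ * ‖z‖ := by ring

@[simp]
lemma rankOne_apply (x y z : E) : rankOne A x y z = x <• ⟪y, z⟫ := rfl

lemma rankOne_mem_compactOperators (x y : E) : rankOne A x y ∈ compactOperators A E :=
  subset_closure (Submodule.subset_span ⟨x, y, rankOne_apply x y⟩)

lemma mem_closure_range_rankOne_self (x : E) : x ∈ closure (Set.range (rankOne A x x)) := by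
  refine Metric.mem_closure_iff.mpr fun ε hε => ?_
  set m : ℝ := 2 / ε ^ 2
  obtain ⟨a, hsa, ha, hnorm⟩ :=
    exists_eq_smul_sub_mul_and_norm_le (inner_self_nonneg (A := A) (x := x)) (m := m)
      (by positivity)
  have hrange : rankOne A x x (m • (x - x <• a)) = x <• a := by
    rw [rankOne_apply, inner_smul_right_real, inner_sub_right, inner_op_smul_right, ← ha]
  refine ⟨x <• a, ⟨_, hrange⟩, ?_⟩
  refine (pow_lt_pow_iff_left₀ dist_nonneg hε.le two_ne_zero).mp ?_
  calc dist x (x <• a) ^ 2 = ‖⟪x <• a - x, x <• a - x⟫‖ := by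
        rw [dist_comm, dist_eq_norm, norm_sq_eq]
    _ ≤ m⁻¹ := by rwa [inner_op_smul_sub_self hsa]
    _ < ε ^ 2 := by simp only [m, inv_div]; linarith [pow_pos hε 2]

lemma eq_one_of_mul_rankOne_self {e : E →L[ℂ] E} (he : ∀ x : E, e * rankOne A x x = rankOne A x x) :
    e = 1 := by
  ext x
  have hfix : closure (Set.range (rankOne A x x)) ⊆ {z | e z = z} :=
    closure_minimal (Set.range_subset_iff.mpr fun z => congr($(he x) z))
      (isClosed_eq e.continuous continuous_id)
  exact hfix (mem_closure_range_rankOne_self x)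

end Normed

end RightCStarModule

lemma ContinuousLinearMap.surjective_of_norm_one_sub_lt_one {𝕜 E : Type*}
    [NontriviallyNormedField 𝕜] [NormedAddCommGroup E] [NormedSpace 𝕜 E] [CompleteSpace E]
    {S : E →L[𝕜] E} (hS : ‖1 - S‖ < 1) :
    Function.Surjective S := by
  have := isUnit_one_sub_of_norm_lt_one hS
  rw [sub_sub_cancel, ContinuousLinearMap.isUnit_iff_bijective] at this
  exact this.2

open RightCStarModule in
/-- If `K(H)` has a (multiplicative) identity, then the Hilbert `A`-module `H` is
algebraically finitely generated: there are `ξ₁, …, ξₙ ∈ H` with `H = ∑ᵢ ξᵢ·A`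
(no closure taken). -/
theorem stmt6 {A E : Type*} [NonUnitalCStarAlgebra A] [PartialOrder A] [StarOrderedRing A]
    [NormedAddCommGroup E] [NormedSpace ℂ E] [SMul Aᵐᵒᵖ E] [RightCStarModule A E] [CompleteSpace E]
    (hunit : ∃ e ∈ compactOperators A E, ∀ T ∈ compactOperators A E,
      e * T = T ∧ T * e = T) :
    ∃ (n : ℕ) (ξ : Fin n → E), ∀ h : E, ∃ a : Fin n → A, h = ∑ i, ξ i <• a i := by
  obtain ⟨e, he, hid⟩ := hunit
  obtain rfl : e = 1 :=
    eq_one_of_mul_rankOne_self fun x => (hid _ (rankOne_mem_compactOperators x x)).1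
  obtain ⟨S, hS, hdist⟩ := Metric.mem_closure_iff.mp he 1 one_pos
  obtain ⟨n, ξ, η, hSξη⟩ := exists_sum_of_mem_span_rankOne hS
  have hsurj : Function.Surjective S :=
    ContinuousLinearMap.surjective_of_norm_one_sub_lt_one (by rwa [← dist_eq_norm])
  refine ⟨n, ξ, fun h => ?_⟩
  obtain ⟨w, rfl⟩ := hsurj h
  exact ⟨fun i => inner A (η i) w, hSξη w⟩

end
end

section
/- Let A be a C*-algebra, H a Hilbert A-module, and φ : H → A a bounded module map. Then for any finite subset F ⊆ H and ε > 0 there exists x ∈ H with ‖x‖ ≤ ‖φ‖ such that ‖φ(ξ) − ⟨x, ξ⟩‖ < ε for all ξ ∈ F. Moreover, if H is countably generated, there is a sequence xₙ ∈ H with ‖xₙ‖ ≤ ‖φ‖ and ‖φ(ξ) − ⟨xₙ, ξ⟩‖ → 0 for every ξ ∈ H. -/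
open scoped RightActions
open Filter Topology

noncomputable section

/-!
For finite `F ⊆ E` let `K = ∑_{ξ ∈ F} θ_{ξ,ξ}` be its frame operator, a positive element of the
C⋆-algebra of adjointable operators, and for `t > 0` put `c = (t + K)⁻¹` and `e = cK`. The vector
`x = ∑_{ξ ∈ F} ξ · φ(cξ)⋆` satisfies `⟪x, ζ⟫ = φ(eζ)`, so `‖x‖ ≤ ‖φ‖` because `‖e‖ ≤ 1`, and
`φ(ξ) - ⟪x, ξ⟫ = φ((1 - e)ξ)`, where `‖(1 - e)ξ‖² ≤ ‖(1 - e)K(1 - e)‖ ≤ t / 4` for `ξ ∈ F`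
since `(1 - e)K(1 - e) = t² K (t + K)⁻²`. For the sequence, take larger and larger finite sets of
generators with smaller and smaller `ε`: the error maps `ξ ↦ φ(ξ) - ⟪xₙ, ξ⟫` are module maps
bounded by `2‖φ‖`, so convergence on the generators spreads to their closed linear span.

The right `A`-module `E` is handled as a left `Aᵐᵒᵖ`-module in the sense of Mathlib's
`CStarModule`.
-/

open scoped InnerProductSpace

theorem le_of_sq_le_mul {a b : ℝ} (hb : 0 ≤ b) (h : a ^ 2 ≤ b * a) : a ≤ b := by nlinarith

theorem CStarAlgebra.exists_norm_mul_le_one_and_norm_conj_one_sub_mul_le {𝔄 : Type*}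
    [CStarAlgebra 𝔄] [PartialOrder 𝔄] [StarOrderedRing 𝔄] {a : 𝔄} (ha : 0 ≤ a) {t : ℝ}
    (ht : 0 < t) : ∃ c : 𝔄, IsSelfAdjoint (c * a) ∧ ‖c * a‖ ≤ 1 ∧
      ‖(1 - c * a) * a * (1 - c * a)‖ ≤ t / 4 := by
  have hpos : ∀ s ∈ spectrum ℝ a, 0 < t + s := fun s hs =>
    add_pos_of_pos_of_nonneg ht (spectrum_nonneg_of_nonneg ha hs)
  have hcont : ContinuousOn (fun s : ℝ => (t + s)⁻¹) (spectrum ℝ a) :=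
    (continuousOn_const.add continuousOn_id).inv₀ fun s hs => (hpos s hs).ne'
  have he : cfc (fun s : ℝ => (t + s)⁻¹) a * a = cfc (fun s : ℝ => (t + s)⁻¹ * s) a := by
    rw [cfc_mul (fun s : ℝ => (t + s)⁻¹) (fun s => s) a hcont, cfc_id' ℝ a]
  have hd : 1 - cfc (fun s : ℝ => (t + s)⁻¹) a * a = cfc (fun s : ℝ => t * (t + s)⁻¹) a := by
    rw [he, ← cfc_const_one ℝ a, ← cfc_sub _ _ a]
    exact cfc_congr fun s hs => by field_simp [(hpos s hs).ne']; ring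
  refine ⟨cfc (fun s : ℝ => (t + s)⁻¹) a, he ▸ cfc_predicate _ a, ?_, ?_⟩
  · rw [he]
    refine norm_cfc_le zero_le_one fun s hs => ?_
    have hs0 := spectrum_nonneg_of_nonneg ha hs
    rw [Real.norm_of_nonneg (by positivity), inv_mul_le_one₀ (hpos s hs)]
    linarith
  · have hdcont : ContinuousOn (fun s : ℝ => t * (t + s)⁻¹) (spectrum ℝ a) :=
      continuousOn_const.mul hcont
    have hdad : cfc (fun s : ℝ => t * (t + s)⁻¹) a * a * cfc (fun s : ℝ => t * (t + s)⁻¹) a =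
        cfc (fun s : ℝ => t * (t + s)⁻¹ * s * (t * (t + s)⁻¹)) a := by
      rw [cfc_mul (fun s : ℝ => t * (t + s)⁻¹ * s) _ a (hdcont.mul continuousOn_id) hdcont,
        cfc_mul (fun s : ℝ => t * (t + s)⁻¹) (fun s => s) a hdcont, cfc_id' ℝ a]
    rw [hd, hdad]
    refine norm_cfc_le (by positivity) fun s hs => ?_
    have hs0 := spectrum_nonneg_of_nonneg ha hs
    have hts : (t + s) ^ 2 ≠ 0 := (pow_pos (hpos s hs) 2).ne'
    rw [Real.norm_of_nonneg (by positivity),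
      show t * (t + s)⁻¹ * s * (t * (t + s)⁻¹) = t / 4 * (4 * t * s / (t + s) ^ 2) by
        field_simp]
    refine mul_le_of_le_one_right (by positivity) ((div_le_one₀ (by positivity)).mpr ?_)
    nlinarith [sq_nonneg (t - s)]

theorem ContinuousLinearMap.tendsto_nhds_zero_of_dense_span {ι 𝕜 E F : Type*}
    [NontriviallyNormedField 𝕜] [SeminormedAddCommGroup E] [NormedSpace 𝕜 E]
    [SeminormedAddCommGroup F] [NormedSpace 𝕜 F] {l : Filter ι} {T : ι → E →L[𝕜] F} {C : ℝ}
    (hT : ∀ i x, ‖T i x‖ ≤ C * ‖x‖) {s : Set E} (hs : Dense (Submodule.span 𝕜 s : Set E))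
    (h : ∀ x ∈ s, Tendsto (fun i => T i x) l (𝓝 0)) (x : E) :
    Tendsto (fun i => T i x) l (𝓝 0) := by
  let S : Submodule 𝕜 E :=
    { carrier := {x | Tendsto (fun i => T i x) l (𝓝 0)}
      add_mem' := fun hx hy => by simpa using hx.add hy
      zero_mem' := by simp [tendsto_const_nhds]
      smul_mem' := fun c x hx => by simpa using hx.const_smul c }
  have hT' : Equicontinuous ((↑) ∘ T : ι → E → F) := by
    have := (NormedSpace.equicontinuous_TFAE T).out 3 1
    exact this.mp ⟨C, hT⟩
  have hS : IsClosed (S : Set E) := hT'.isClosed_setOfPred_tendsto continuous_const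
  exact hS.closure_subset_iff.mpr (Submodule.span_le.mpr h) (hs x)

namespace CStarModule

section Algebraic

variable {B E : Type*} [NonUnitalCStarAlgebra B] [PartialOrder B]
  [NormedAddCommGroup E] [NormedSpace ℂ E] [SMul B E] [CStarModule B E]

variable (B) in
theorem ext_inner_left {x y : E} (h : ∀ z : E, ⟪z, x⟫_B = ⟪z, y⟫_B) : x = y := by
  rw [← sub_eq_zero, ← inner_self (A := B), inner_sub_right, h, sub_self]

variable (B) in
theorem ext_inner_right {x y : E} (h : ∀ z : E, ⟪x, z⟫_B = ⟪y, z⟫_B) : x = y := by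
  rw [← sub_eq_zero, ← inner_self (A := B), inner_sub_left, h, sub_self]

protected theorem add_smul (a b : B) (x : E) : (a + b) • x = a • x + b • x :=
  ext_inner_left B fun z => by simp [add_mul]

protected theorem smul_assoc (c : ℂ) (a : B) (x : E) : (c • a) • x = c • a • x :=
  ext_inner_left B fun z => by simp [smul_mul_assoc]

protected theorem norm_smul_le (a : B) (x : E) : ‖a • x‖ ≤ ‖a‖ * ‖x‖ := by
  refine (pow_le_pow_iff_left₀ (norm_nonneg _) (by positivity) two_ne_zero).mp ?_
  calc ‖a • x‖ ^ 2 = ‖a * ⟪x, x⟫_B * star a‖ := by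
        rw [norm_sq_eq B, inner_op_smul_left, inner_op_smul_right, mul_assoc]
    _ ≤ ‖a‖ * ‖⟪x, x⟫_B‖ * ‖star a‖ := norm_mul₃_le
    _ = (‖a‖ * ‖x‖) ^ 2 := by rw [norm_star, ← norm_sq_eq B]; ring

variable (B E) in
/-- Pairs `(T, S)` of operators with `S` adjoint to `T`; the second factor is reversed so that
`(T, S) * (T', S') = (T T', S' S)`. -/
def adjointablePairs : Subring ((E →L[ℂ] E) × (E →L[ℂ] E)ᵐᵒᵖ) where
  carrier := {p | ∀ x y, ⟪p.2.unop x, y⟫_B = ⟪x, p.1 y⟫_B}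
  zero_mem' := by simp
  one_mem' := by simp
  add_mem' hp hq x y := by simp [hp x y, hq x y]
  neg_mem' hp x y := by simp [hp x y]
  mul_mem' hp hq x y := by simp [hq _ y, hp x]

variable (B E) in
/-- Normed by `max ‖T‖ ‖T⋆‖`, inherited from the product; this is the operator norm of `T` by
`Adjointable.norm_eq`. -/
def Adjointable : Type _ := adjointablePairs B E

namespace Adjointable

noncomputable instance : NormedRing (Adjointable B E) :=
  inferInstanceAs (NormedRing (adjointablePairs B E))

instance : FunLike (Adjointable B E) E E where
  coe T := T.1.1
  coe_injective T S h := by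
    have hS : T.1.2 = S.1.2 := MulOpposite.unop_injective <| ContinuousLinearMap.ext fun x =>
      ext_inner_right B fun y => by rw [T.2 x y, S.2 x y]; exact congrArg _ (congrFun h y)
    exact Subtype.ext (Prod.ext (DFunLike.coe_injective h) hS)

@[ext]
theorem ext {T S : Adjointable B E} (h : ∀ x, T x = S x) : T = S := DFunLike.ext _ _ h

variable (B E) in
noncomputable def toCLM : Adjointable B E →+* (E →L[ℂ] E) :=
  (RingHom.fst _ _).comp (adjointablePairs B E).subtype

instance : ContinuousLinearMapClass (Adjointable B E) ℂ E E where
  map_add T := (toCLM B E T).map_add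
  map_smulₛₗ T := (toCLM B E T).map_smul
  map_continuous T := (toCLM B E T).continuous

@[simp]
theorem toCLM_apply (T : Adjointable B E) (x : E) : toCLM B E T x = T x := rfl

@[simp]
theorem sum_apply {ι : Type*} (s : Finset ι) (T : ι → Adjointable B E) (x : E) :
    (∑ i ∈ s, T i) x = ∑ i ∈ s, T i x := by
  rw [← toCLM_apply, map_sum, _root_.sum_apply]; rfl

@[simp] theorem mul_apply (T S : Adjointable B E) (x : E) : (T * S) x = T (S x) := rfl
@[simp] theorem one_apply (x : E) : (1 : Adjointable B E) x = x := rfl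
@[simp] theorem sub_apply (T S : Adjointable B E) (x : E) : (T - S) x = T x - S x := rfl

instance : Star (Adjointable B E) where
  star T := ⟨(T.1.2.unop, .op T.1.1), fun x y => by
    change ⟪T.1.1 x, y⟫_B = ⟪x, T.1.2.unop y⟫_B
    rw [← star_inner, ← T.2 y x, star_inner]⟩

theorem inner_star_apply (T : Adjointable B E) (x y : E) : ⟪star T x, y⟫_B = ⟪x, T y⟫_B :=
  T.2 x y

theorem inner_apply (T : Adjointable B E) (x y : E) : ⟪T x, y⟫_B = ⟪x, star T y⟫_B :=
  (star T).2 x y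

instance : StarRing (Adjointable B E) where
  star_involutive _ := rfl
  star_mul _ _ := rfl
  star_add _ _ := rfl

instance : SMul ℂ (Adjointable B E) where
  smul c T := ⟨(c • T.1.1, .op (star c • T.1.2.unop)), fun x y => by
    change ⟪star c • T.1.2.unop x, y⟫_B = ⟪x, c • T.1.1 y⟫_B
    simp [T.2 x y]⟩

@[simp] theorem smul_apply (c : ℂ) (T : Adjointable B E) (x : E) : (c • T) x = c • T x := rfl

instance : Module ℂ (Adjointable B E) where
  one_smul _ := ext fun _ => one_smul _ _
  mul_smul _ _ _ := ext fun _ => mul_smul _ _ _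
  smul_zero _ := ext fun _ => smul_zero _
  smul_add _ _ _ := ext fun _ => smul_add _ _ _
  add_smul _ _ _ := ext fun _ => add_smul _ _ _
  zero_smul _ := ext fun _ => zero_smul _ _

noncomputable instance : Algebra ℂ (Adjointable B E) :=
  Algebra.ofModule (fun _ _ _ => ext fun _ => rfl)
    (fun c T _ => ext fun _ => map_smul (toCLM B E T) c _)

@[simp]
theorem algebraMap_apply (r : ℝ) (x : E) : algebraMap ℝ (Adjointable B E) r x = r • x := by
  rw [Algebra.algebraMap_eq_smul_one, ← Complex.coe_smul, smul_apply, one_apply, Complex.coe_smul]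

instance : StarModule ℂ (Adjointable B E) where
  star_smul _ _ := ext fun _ => rfl

theorem apply_smul (T : Adjointable B E) (b : B) (x : E) : T (b • x) = b • T x :=
  ext_inner_left B fun z => by
    rw [← inner_star_apply, inner_op_smul_right, inner_op_smul_right, inner_star_apply]

end Adjointable

end Algebraic

section Analytic

variable {B E : Type*} [NonUnitalCStarAlgebra B] [PartialOrder B] [StarOrderedRing B]
  [NormedAddCommGroup E] [NormedSpace ℂ E] [SMul B E] [CStarModule B E]

theorem isClosed_adjointablePairs :
    IsClosed (adjointablePairs B E : Set ((E →L[ℂ] E) × (E →L[ℂ] E)ᵐᵒᵖ)) := by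
  change IsClosed {p : (E →L[ℂ] E) × (E →L[ℂ] E)ᵐᵒᵖ | ∀ x y, ⟪p.2.unop x, y⟫_B = ⟪x, p.1 y⟫_B}
  simp only [Set.ofPred_forall]
  exact isClosed_iInter fun x => isClosed_iInter fun y => isClosed_eq (by fun_prop) (by fun_prop)

namespace Adjointable

instance [CompleteSpace E] : CompleteSpace (Adjointable B E) :=
  isClosed_adjointablePairs.completeSpace_coe

theorem norm_toCLM_star_le (T : Adjointable B E) : ‖toCLM B E (star T)‖ ≤ ‖toCLM B E T‖ := by
  refine ContinuousLinearMap.opNorm_le_bound _ (norm_nonneg _) fun x => ?_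
  have h : ‖star T x‖ ^ 2 ≤ (‖toCLM B E T‖ * ‖x‖) * ‖star T x‖ :=
    calc ‖star T x‖ ^ 2 = ‖⟪x, T (star T x)⟫_B‖ := by rw [norm_sq_eq B, inner_star_apply]
      _ ≤ ‖x‖ * ‖toCLM B E T (star T x)‖ := norm_inner_le E
      _ ≤ ‖x‖ * (‖toCLM B E T‖ * ‖star T x‖) := by gcongr; exact ContinuousLinearMap.le_opNorm _ _
      _ = (‖toCLM B E T‖ * ‖x‖) * ‖star T x‖ := by ring
  exact le_of_sq_le_mul (by positivity) h

theorem norm_eq (T : Adjointable B E) : ‖T‖ = ‖toCLM B E T‖ :=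
  max_eq_left (norm_toCLM_star_le T)

theorem norm_apply_le (T : Adjointable B E) (x : E) : ‖T x‖ ≤ ‖T‖ * ‖x‖ :=
  norm_eq T ▸ (toCLM B E T).le_opNorm x

theorem norm_inner_apply_le (T : Adjointable B E) (x : E) : ‖⟪x, T x⟫_B‖ ≤ ‖T‖ * ‖x‖ ^ 2 :=
  calc ‖⟪x, T x⟫_B‖ ≤ ‖x‖ * ‖T x‖ := norm_inner_le E
    _ ≤ ‖x‖ * (‖T‖ * ‖x‖) := by gcongr; exact norm_apply_le T x
    _ = ‖T‖ * ‖x‖ ^ 2 := by ring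

noncomputable instance : NormedAlgebra ℂ (Adjointable B E) where
  norm_smul_le c T := by
    rw [norm_eq, norm_eq]
    exact norm_smul_le c (toCLM B E T)

instance : CStarRing (Adjointable B E) where
  norm_mul_self_le T := by
    have h : ‖T‖ ≤ √‖star T * T‖ := by
      rw [norm_eq]
      refine ContinuousLinearMap.opNorm_le_bound _ (by positivity) fun x => ?_
      rw [toCLM_apply, ← Real.sqrt_sq (norm_nonneg (T x)), ← Real.sqrt_sq (norm_nonneg x),
        ← Real.sqrt_mul (norm_nonneg _)]
      gcongr
      calc ‖T x‖ ^ 2 = ‖⟪x, (star T * T) x⟫_B‖ := by rw [norm_sq_eq B, inner_apply]; rfl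
        _ ≤ ‖star T * T‖ * ‖x‖ ^ 2 := norm_inner_apply_le _ x
    calc ‖T‖ * ‖T‖ ≤ √‖star T * T‖ * √‖star T * T‖ := mul_self_le_mul_self (norm_nonneg _) h
      _ = ‖star T * T‖ := Real.mul_self_sqrt (norm_nonneg _)

noncomputable instance [CompleteSpace E] : CStarAlgebra (Adjointable B E) where

end Adjointable

open Adjointable in
variable (B) in
noncomputable def rankOne (ξ : E) : Adjointable B E :=
  let θ : E →L[ℂ] E := LinearMap.mkContinuous
    { toFun := fun ζ => ⟪ξ, ζ⟫_B • ξ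
      map_add' := fun _ _ => by simp [CStarModule.add_smul]
      map_smul' := fun _ _ => by simp [CStarModule.smul_assoc] }
    (‖ξ‖ ^ 2) fun ζ =>
      calc ‖⟪ξ, ζ⟫_B • ξ‖ ≤ ‖⟪ξ, ζ⟫_B‖ * ‖ξ‖ := CStarModule.norm_smul_le _ _
        _ ≤ ‖ξ‖ * ‖ζ‖ * ‖ξ‖ := by gcongr; exact norm_inner_le E
        _ = ‖ξ‖ ^ 2 * ‖ζ‖ := by ring
  ⟨(θ, .op θ), fun x y => by
    change ⟪⟪ξ, x⟫_B • ξ, y⟫_B = ⟪x, ⟪ξ, y⟫_B • ξ⟫_B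
    simp⟩

@[simp]
theorem rankOne_apply (ξ ζ : E) : rankOne B ξ ζ = ⟪ξ, ζ⟫_B • ξ := rfl

theorem isSelfAdjoint_rankOne (ξ : E) : IsSelfAdjoint (rankOne B ξ) := rfl

variable (B) in
noncomputable def frameOperator (F : Finset E) : Adjointable B E := ∑ ξ ∈ F, rankOne B ξ

theorem frameOperator_apply (F : Finset E) (ζ : E) :
    frameOperator B F ζ = ∑ ξ ∈ F, ⟪ξ, ζ⟫_B • ξ := by
  simp [frameOperator]

theorem inner_frameOperator_apply (F : Finset E) (ζ : E) :
    ⟪ζ, frameOperator B F ζ⟫_B = ∑ ξ ∈ F, ⟪ξ, ζ⟫_B * star ⟪ξ, ζ⟫_B := by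
  simp [frameOperator_apply]

theorem inner_mul_star_le_inner_frameOperator_apply {F : Finset E} {ξ : E} (hξ : ξ ∈ F)
    (ζ : E) : ⟪ξ, ζ⟫_B * star ⟪ξ, ζ⟫_B ≤ ⟪ζ, frameOperator B F ζ⟫_B := by
  rw [inner_frameOperator_apply]
  exact Finset.single_le_sum (fun η _ => mul_star_self_nonneg ⟪η, ζ⟫_B) hξ

open Adjointable in
theorem norm_apply_sq_le_norm_mul_frameOperator_mul {D : Adjointable B E} (hD : IsSelfAdjoint D)
    {F : Finset E} {ξ : E} (hξ : ξ ∈ F) : ‖D ξ‖ ^ 2 ≤ ‖D * frameOperator B F * D‖ := by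
  set q := ⟪D ξ, D ξ⟫_B with hq_def
  have hq : q * star q ≤ ⟪D ξ, (D * frameOperator B F * D) (D ξ)⟫_B := by
    have h1 : q = ⟪ξ, D (D ξ)⟫_B := by rw [hq_def, inner_apply, hD.star_eq]
    have h2 : ⟪D (D ξ), frameOperator B F (D (D ξ))⟫_B =
        ⟪D ξ, (D * frameOperator B F * D) (D ξ)⟫_B := by
      rw [inner_apply, hD.star_eq]; rfl
    rw [h1, ← h2]
    exact inner_mul_star_le_inner_frameOperator_apply hξ _
  have h : ‖q‖ ^ 2 ≤ ‖D * frameOperator B F * D‖ * ‖q‖ :=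
    calc ‖q‖ ^ 2 = ‖q * star q‖ := by rw [CStarRing.norm_self_mul_star, sq]
      _ ≤ ‖⟪D ξ, (D * frameOperator B F * D) (D ξ)⟫_B‖ :=
          CStarAlgebra.norm_le_norm_of_nonneg_of_le (mul_star_self_nonneg q) hq
      _ ≤ ‖D * frameOperator B F * D‖ * ‖D ξ‖ ^ 2 := norm_inner_apply_le _ _
      _ = ‖D * frameOperator B F * D‖ * ‖q‖ := by rw [norm_sq_eq B]
  rw [norm_sq_eq B]
  exact le_of_sq_le_mul (norm_nonneg _) h

end Analytic

section Positivity

variable {B E : Type*} [NonUnitalCStarAlgebra B] [PartialOrder B] [StarOrderedRing B]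
  [NormedAddCommGroup E] [NormedSpace ℂ E] [SMul B E] [CStarModule B E] [CompleteSpace E]

namespace Adjointable

noncomputable instance : PartialOrder (Adjointable B E) := CStarAlgebra.spectralOrder _

instance : StarOrderedRing (Adjointable B E) := CStarAlgebra.spectralOrderedRing _

theorem nonneg_of_inner_apply_le {T : Adjointable B E} (hT : IsSelfAdjoint T) {M : ℝ}
    (hM : 0 ≤ M) (h : ∀ x, ⟪T x, T x⟫_B ≤ M • ⟪x, T x⟫_B) : 0 ≤ T := by
  set r := M / 2
  -- `T² ≤ M T` gives `‖r - T‖ ≤ r`, hence `T ≥ r - ‖r - T‖ ≥ 0`.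
  have hnorm : ‖algebraMap ℝ _ r - T‖ ≤ r := by
    rw [norm_eq]
    refine ContinuousLinearMap.opNorm_le_bound _ (by positivity) fun x => ?_
    have hsymm : ⟪T x, x⟫_B = ⟪x, T x⟫_B := by rw [inner_apply, hT.star_eq]
    have hle : ⟪r • x - T x, r • x - T x⟫_B ≤ (r ^ 2) • ⟪x, x⟫_B :=
      calc ⟪r • x - T x, r • x - T x⟫_B = (r ^ 2) • ⟪x, x⟫_B - (M • ⟪x, T x⟫_B - ⟪T x, T x⟫_B) := by
            simp only [inner_sub_left, inner_sub_right, inner_smul_left_real,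
              inner_smul_right_real, hsymm]
            module
        _ ≤ (r ^ 2) • ⟪x, x⟫_B := sub_le_self _ (sub_nonneg.mpr (h x))
    refine (pow_le_pow_iff_left₀ (norm_nonneg _) (by positivity) two_ne_zero).mp ?_
    calc ‖toCLM B E (algebraMap ℝ _ r - T) x‖ ^ 2 = ‖⟪r • x - T x, r • x - T x⟫_B‖ := by
          simp [norm_sq_eq B]
      _ ≤ ‖(r ^ 2) • ⟪x, x⟫_B‖ := CStarAlgebra.norm_le_norm_of_nonneg_of_le inner_self_nonneg hle
      _ = (r * ‖x‖) ^ 2 := by rw [norm_smul, ← norm_sq_eq B]; simp [mul_pow]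
  have hT' := (hT.sub (.algebraMap _ (.all r))).neg_algebraMap_norm_le_self
  rw [← norm_neg, neg_sub] at hT'
  have := add_le_add_right ((neg_le_neg (algebraMap_mono _ hnorm)).trans hT') (algebraMap ℝ _ r)
  simpa using this

end Adjointable

open Adjointable

theorem rankOne_nonneg (ξ : E) : 0 ≤ rankOne B ξ := by
  refine nonneg_of_inner_apply_le (isSelfAdjoint_rankOne ξ) (sq_nonneg ‖ξ‖) fun x => ?_
  calc ⟪rankOne B ξ x, rankOne B ξ x⟫_B = ⟪ξ, x⟫_B * ⟪ξ, ξ⟫_B * star ⟪ξ, x⟫_B := by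
        simp [mul_assoc]
    _ ≤ ‖⟪ξ, ξ⟫_B‖ • (⟪ξ, x⟫_B * star ⟪ξ, x⟫_B) := CStarAlgebra.star_right_conjugate_le_norm_smul
    _ = ‖ξ‖ ^ 2 • ⟪x, rankOne B ξ x⟫_B := by simp [norm_sq_eq B]

theorem frameOperator_nonneg (F : Finset E) : 0 ≤ frameOperator B F :=
  Finset.sum_nonneg fun ξ _ => rankOne_nonneg ξ

end Positivity

section SelfDuality

variable {B E : Type*} [NonUnitalCStarAlgebra B] [PartialOrder B] [StarOrderedRing B]
  [NormedAddCommGroup E] [NormedSpace ℂ E] [SMul B E] [CStarModule B E]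

open Adjointable

theorem inner_sum_star_smul (ψ : E →L[ℂ] B) (hψ : ∀ (b : B) (x : E), ψ (b • x) = b * ψ x)
    (F : Finset E) (c : Adjointable B E) (ζ : E) :
    ⟪∑ ξ ∈ F, star (ψ (c ξ)) • ξ, ζ⟫_B = ψ ((c * frameOperator B F) ζ) := by
  simp [inner_sum_left, frameOperator_apply, map_sum, apply_smul, hψ]

theorem norm_le_of_forall_inner_eq_apply (ψ : E →L[ℂ] B) {T : Adjointable B E} (hT : ‖T‖ ≤ 1)
    {x : E} (h : ∀ ζ, ⟪x, ζ⟫_B = ψ (T ζ)) : ‖x‖ ≤ ‖ψ‖ := by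
  refine le_of_sq_le_mul (norm_nonneg ψ) ?_
  calc ‖x‖ ^ 2 = ‖ψ (T x)‖ := by rw [norm_sq_eq B, h]
    _ ≤ ‖ψ‖ * (‖T‖ * ‖x‖) := (ψ.le_opNorm _).trans (by gcongr; exact norm_apply_le T x)
    _ ≤ ‖ψ‖ * ‖x‖ := by gcongr; exact mul_le_of_le_one_left (norm_nonneg x) hT

variable [CompleteSpace E]

theorem exists_norm_le_forall_mem_norm_sub_inner_le (ψ : E →L[ℂ] B)
    (hψ : ∀ (b : B) (x : E), ψ (b • x) = b * ψ x) (F : Finset E) {δ : ℝ} (hδ : 0 < δ) :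
    ∃ x : E, ‖x‖ ≤ ‖ψ‖ ∧ ∀ ξ ∈ F, ‖ψ ξ - ⟪x, ξ⟫_B‖ ≤ ‖ψ‖ * δ := by
  obtain ⟨c, hsa, hnorm, hconj⟩ :=
    CStarAlgebra.exists_norm_mul_le_one_and_norm_conj_one_sub_mul_le
      (frameOperator_nonneg (B := B) F) (show 0 < 4 * δ ^ 2 by positivity)
  have hx := inner_sum_star_smul ψ hψ F c
  refine ⟨_, norm_le_of_forall_inner_eq_apply ψ hnorm hx, fun ξ hξ => ?_⟩
  have hd : ‖(1 - c * frameOperator B F) ξ‖ ≤ δ := by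
    refine (pow_le_pow_iff_left₀ (norm_nonneg _) hδ.le two_ne_zero).mp ?_
    calc _ ≤ _ := norm_apply_sq_le_norm_mul_frameOperator_mul ((IsSelfAdjoint.one _).sub hsa) hξ
      _ ≤ 4 * δ ^ 2 / 4 := hconj
      _ = δ ^ 2 := by ring
  calc ‖ψ ξ - ⟪_, ξ⟫_B‖ = ‖ψ ((1 - c * frameOperator B F) ξ)‖ := by
        rw [hx, Adjointable.sub_apply, one_apply, map_sub]
    _ ≤ ‖ψ‖ * δ := (ψ.le_opNorm _).trans (by gcongr)

theorem exists_norm_le_forall_mem_norm_sub_inner_lt (ψ : E →L[ℂ] B)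
    (hψ : ∀ (b : B) (x : E), ψ (b • x) = b * ψ x) (F : Finset E) {ε : ℝ} (hε : 0 < ε) :
    ∃ x : E, ‖x‖ ≤ ‖ψ‖ ∧ ∀ ξ ∈ F, ‖ψ ξ - ⟪x, ξ⟫_B‖ < ε := by
  obtain ⟨x, hx, hF⟩ :=
    exists_norm_le_forall_mem_norm_sub_inner_le ψ hψ F (δ := ε / (‖ψ‖ + 1)) (by positivity)
  refine ⟨x, hx, fun ξ hξ => (hF ξ hξ).trans_lt ?_⟩
  rw [mul_div_assoc', div_lt_iff₀ (by positivity)]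
  nlinarith

theorem exists_seq_norm_le_tendsto_norm_sub_inner (ψ : E →L[ℂ] B)
    (hψ : ∀ (b : B) (x : E), ψ (b • x) = b * ψ x) {G : Set E} (hG : G.Countable)
    (hdense : Dense (Submodule.span ℂ {z : E | ∃ g ∈ G, ∃ b : B, z = b • g} : Set E)) :
    ∃ x : ℕ → E, (∀ n, ‖x n‖ ≤ ‖ψ‖) ∧
      ∀ ξ, Tendsto (fun n => ‖ψ ξ - ⟪x n, ξ⟫_B‖) atTop (𝓝 0) := by
  classical
  obtain ⟨g, hg⟩ := Set.countable_iff_exists_subset_range.mp hG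
  choose x hx_norm hx using fun n : ℕ => exists_norm_le_forall_mem_norm_sub_inner_lt ψ hψ
    ((Finset.range (n + 1)).image g) (Nat.one_div_pos_of_nat (α := ℝ))
  refine ⟨x, hx_norm, fun ξ => ?_⟩
  have hg_lim (i : ℕ) : Tendsto (fun n => ψ (g i) - ⟪x n, g i⟫_B) atTop (𝓝 0) :=
    squeeze_zero_norm' (eventually_atTop.mpr ⟨i, fun n hn => (hx n (g i)
      (Finset.mem_image_of_mem g (Finset.mem_range.mpr (Nat.lt_succ_of_le hn)))).le⟩)
      tendsto_one_div_add_atTop_nhds_zero_nat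
  refine tendsto_zero_iff_norm_tendsto_zero.mp <|
    ContinuousLinearMap.tendsto_nhds_zero_of_dense_span (T := fun n => ψ - innerSL (x n))
      (C := 2 * ‖ψ‖) (fun n ζ => ?_) hdense ?_ ξ
  · calc ‖ψ ζ - ⟪x n, ζ⟫_B‖ ≤ ‖ψ‖ * ‖ζ‖ + ‖x n‖ * ‖ζ‖ :=
          (norm_sub_le _ _).trans (add_le_add (ψ.le_opNorm ζ) (norm_inner_le E))
      _ ≤ 2 * ‖ψ‖ * ‖ζ‖ := by nlinarith [hx_norm n, norm_nonneg ζ]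
  · rintro _ ⟨_, hgG, b, rfl⟩
    obtain ⟨i, rfl⟩ := hg hgG
    simpa [innerSL_apply, hψ, mul_sub] using (hg_lim i).const_mul b

end SelfDuality

end CStarModule

namespace RightCStarModule

variable {A E : Type*} [NonUnitalCStarAlgebra A] [PartialOrder A] [NormedAddCommGroup E]
  [NormedSpace ℂ E] [SMul Aᵐᵒᵖ E] [RightCStarModule A E]

open MulOpposite in
instance toCStarModule : CStarModule Aᵐᵒᵖ E where
  inner x y := op (inner A x y)
  inner_add_right := congrArg op inner_add_right
  inner_self_nonneg := inner_self_nonneg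
  inner_self := op_eq_zero_iff _ |>.trans inner_self
  inner_op_smul_right := congrArg op inner_op_smul_right
  inner_smul_right_complex := congrArg op inner_smul_right_complex
  star_inner x y := congrArg op (star_inner x y)
  norm_eq_sqrt_norm_inner_self := norm_eq_sqrt_norm_inner_self

end RightCStarModule

/-- Approximate self-duality of Hilbert `A`-modules: for any bounded module map
`φ : H → A`, any finite `F ⊆ H` and `ε > 0` there is `x ∈ H` with `‖x‖ ≤ ‖φ‖` and
`‖φ(ξ) - ⟪x, ξ⟫‖ < ε` for all `ξ ∈ F`; moreover, if `H` is countably generated, there is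
a sequence `xₙ ∈ H` with `‖xₙ‖ ≤ ‖φ‖` and `‖φ(ξ) - ⟪xₙ, ξ⟫‖ → 0` for every `ξ ∈ H`. -/
theorem stmt18 {A E : Type*} [NonUnitalCStarAlgebra A] [PartialOrder A] [StarOrderedRing A]
    [NormedAddCommGroup E] [NormedSpace ℂ E] [SMul Aᵐᵒᵖ E] [RightCStarModule A E]
    [CompleteSpace E]
    (φ : E →L[ℂ] A) (hφ : ∀ (x : E) (a : A), φ (x <• a) = φ x * a) :
    (∀ (F : Finset E), ∀ ε > (0 : ℝ), ∃ x : E, ‖x‖ ≤ ‖φ‖ ∧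
      ∀ ξ ∈ F, ‖φ ξ - (inner A x ξ : A)‖ < ε) ∧
    ((∃ G : Set E, G.Countable ∧
        Dense ((Submodule.span ℂ {z : E | ∃ g ∈ G, ∃ a : A, z = g <• a} : Submodule ℂ E)
          : Set E)) →
      ∃ x : ℕ → E, (∀ n, ‖x n‖ ≤ ‖φ‖) ∧
        ∀ ξ : E, Tendsto (fun n => ‖φ ξ - (inner A (x n) ξ : A)‖) atTop (𝓝 0)) := by
  let ψ : E →L[ℂ] Aᵐᵒᵖ :=
    (MulOpposite.opLinearIsometryEquiv ℂ A).toLinearIsometry.toContinuousLinearMap.comp φ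
  have hψ (b : Aᵐᵒᵖ) (x : E) : ψ (b • x) = b * ψ x := congrArg MulOpposite.op (hφ x b.unop)
  have hψ_norm : ‖ψ‖ = ‖φ‖ := LinearIsometry.norm_toContinuousLinearMap_comp _
  refine ⟨fun F ε hε => hψ_norm ▸ CStarModule.exists_norm_le_forall_mem_norm_sub_inner_lt ψ hψ F hε,
    fun ⟨G, hG, hdense⟩ => ?_⟩
  have hgen : {z : E | ∃ g ∈ G, ∃ a : A, z = g <• a} = {z | ∃ g ∈ G, ∃ b : Aᵐᵒᵖ, z = b • g} := by
    simp only [MulOpposite.op_surjective.exists]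
  exact hψ_norm ▸ CStarModule.exists_seq_norm_le_tendsto_norm_sub_inner ψ hψ hG (hgen ▸ hdense)

end
end
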